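/- arXiv:2207.07775 — 3 statements merged into one kernel-verified Lean document; each statement's English description precedes it below -/
import Mathlib

section
/- For all integers k ≥ 2 and ℓ ≥ 2, there exists γ = γ(k,ℓ) > 0 such that the following holds for all sufficiently large n and any 3-coloring of E(K_n) with colors red, blue, and yellow: if there are fewer than (1/r(k,ℓ))·C(n,2) yellow edges, then there are at least γ·(n)_k blue labeled copies of K_k, or at least γ·(n)_ℓ red labeled copies of K_ℓ. -/
open Filter

/-- Labeled copies of `F` in coloring `χ` with all edges of color `col`, image in `S`. -/
noncomputable def colorCopiesIn {α : Type*} [Fintype α] (F : SimpleGraph α)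
    {n c : ℕ} (χ : Sym2 (Fin n) → Fin c) (col : Fin c) (S : Set (Fin n)) : ℕ :=
  Set.ncard {f : α → Fin n | Function.Injective f ∧ (∀ v, f v ∈ S) ∧
    ∀ v w, F.Adj v w → χ s(f v, f w) = col}

noncomputable def colorCopies {α : Type*} [Fintype α] (F : SimpleGraph α)
    {n c : ℕ} (χ : Sym2 (Fin n) → Fin c) (col : Fin c) : ℕ :=
  colorCopiesIn F χ col Set.univ

/-- Monochromatic labeled copies of `F` in `χ`. -/
noncomputable def monoCopies {α : Type*} [Fintype α] (F : SimpleGraph α)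
    {n c : ℕ} (χ : Sym2 (Fin n) → Fin c) : ℕ :=
  Set.ncard {f : α → Fin n | Function.Injective f ∧
    ∃ col : Fin c, ∀ v w, F.Adj v w → χ s(f v, f w) = col}

/-- Minimum number of monochromatic labeled copies of `F` over all `c`-colorings of `E(K_n)`. -/
noncomputable def minMono {α : Type*} [Fintype α] (F : SimpleGraph α) (n c : ℕ) : ℕ :=
  ⨅ χ : Sym2 (Fin n) → Fin c, monoCopies F χ

/-- Degree of `v` in color `col`. -/
noncomputable def colorDeg {n c : ℕ} (χ : Sym2 (Fin n) → Fin c) (col : Fin c) (v : Fin n) : ℕ :=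
  Set.ncard {w : Fin n | w ≠ v ∧ χ s(v, w) = col}

/-- `H` is `k`-critical. -/
def IsKCritical {α : Type*} (H : SimpleGraph α) (k : ℕ) : Prop :=
  H.chromaticNumber = (k : ℕ∞) ∧
    ∃ e ∈ H.edgeSet, (H.deleteEdges {e}).chromaticNumber = ((k - 1 : ℕ) : ℕ∞)

/-- Every vertex outside `s` is a pendant vertex whose unique neighbor lies in `s`. -/
def PendantOutside {α : Type*} (H : SimpleGraph α) (s : Finset α) : Prop :=
  ∀ v ∉ s, ∃ w ∈ s, H.neighborSet v = {w}

/-- The Turán coloring of `E(K_n)` with `k-1` parts: edges within parts red (`0`),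
edges between parts blue (`1`). -/
def turanColoring (n k : ℕ) : Sym2 (Fin n) → Fin 2 :=
  Sym2.lift ⟨fun i j => if i.val % (k - 1) = j.val % (k - 1) then 0 else 1,
    fun i j => by
      dsimp only
      by_cases h : i.val % (k - 1) = j.val % (k - 1)
      · rw [if_pos h, if_pos h.symm]
      · rw [if_neg h, if_neg fun h' => h h'.symm]⟩

/-- The two-color Ramsey number `r(a,b)`: the least `N` such that every red/blue
coloring of `E(K_N)` contains a red `K_a` or a blue `K_b` (red is `0`, blue is `1`). -/
noncomputable def ramsey2 (a b : ℕ) : ℕ :=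
  sInf {N | ∀ χ : Sym2 (Fin N) → Fin 2,
    (∃ A : Finset (Fin N), A.card = a ∧ ∀ i ∈ A, ∀ j ∈ A, i ≠ j → χ s(i, j) = 0) ∨
    (∃ B : Finset (Fin N), B.card = b ∧ ∀ i ∈ B, ∀ j ∈ B, i ≠ j → χ s(i, j) = 1)}


/-!
Let `R = r(k, l)`; the yellow edges have density below `1 / R`. By Turán's theorem an `s`-set of vertices spanning no non-yellow `K_R` contains at least
`s (s - R + 1) / (2 (R - 1))` yellow edges, whereas an average `s`-set contains fewer than
`s (s - 1) / (2 R)`. For `s = R²` Markov's inequality therefore leaves a fraction at least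
`1 / (R (s - R + 1))` of the `s`-sets containing a non-yellow `K_R`, hence a blue `K_k` or a red
`K_l`. A fixed `t`-set lies in only `C(n - t, s - t)` of the `s`-sets, so double counting turns
this into `≳ C(n, k)` blue `k`-cliques or `≳ C(n, l)` red `l`-cliques, and every `t`-clique
carries `t!` labeled copies of `K_t`.
-/

open Finset

theorem Finset.sum_card_filter_subset_powersetCard {α : Type*} [Fintype α] [DecidableEq α]
    {𝒜 : Finset (Finset α)} {t : ℕ} (h𝒜 : (𝒜 : Set (Finset α)).Sized t) {s : ℕ}
    (hts : t ≤ s) :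
    ∑ S ∈ powersetCard s univ, #{A ∈ 𝒜 | A ⊆ S} =
      #𝒜 * (Fintype.card α - t).choose (s - t) := by
  calc ∑ S ∈ powersetCard s univ, #{A ∈ 𝒜 | A ⊆ S}
      = ∑ A ∈ 𝒜, #{S ∈ powersetCard s univ | A ⊆ S} := by
        simp_rw [card_filter]
        exact sum_comm
    _ = ∑ _A ∈ 𝒜, (Fintype.card α - t).choose (s - t) := sum_congr rfl fun A hA => by
      rw [card_filter_powersetCard_subset A univ s (subset_univ A) (h𝒜 hA ▸ hts), card_univ,
        h𝒜 hA]
    _ = _ := by rw [sum_const, smul_eq_mul]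

namespace SimpleGraph

variable {V : Type*} [Fintype V] {G : SimpleGraph V} [DecidableRel G.Adj]

theorem CliqueFree.two_mul_mul_card_edgeFinset_le {r : ℕ} (h : G.CliqueFree (r + 1)) :
    2 * r * #G.edgeFinset ≤ (r - 1) * Fintype.card V ^ 2 := by
  rcases r.eq_zero_or_pos with rfl | hr
  · simp
  obtain ⟨H, _, hH⟩ := exists_isTuranMaximal (V := V) hr
  calc 2 * r * #G.edgeFinset ≤ 2 * r * #H.edgeFinset := Nat.mul_le_mul_left _ (hH.2 h)
    _ = 2 * r * #(turanGraph (Fintype.card V) r).edgeFinset := by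
      rw [((isTuranMaximal_iff_nonempty_iso_turanGraph hr).1 hH).some.card_edgeFinset_eq]
    _ ≤ _ := mul_card_edgeFinset_turanGraph_le

variable [DecidableEq V]

variable (G) in
lemma card_edgeFinset_add_card_edgeFinset_compl :
    #G.edgeFinset + #Gᶜ.edgeFinset = (Fintype.card V).choose 2 := by
  rw [← card_union_of_disjoint (disjoint_edgeFinset.2 disjoint_compl_right), ← edgeFinset_sup,
    ← card_edgeFinset_top_eq_card_choose_two]
  congr! 2
  exact sup_compl_eq_top

theorem card_mul_sub_le_of_compl_cliqueFree {r : ℕ} (hr : 0 < r) (h : Gᶜ.CliqueFree (r + 1)) :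
    Fintype.card V * (Fintype.card V - r) ≤ 2 * r * #G.edgeFinset := by
  have turan := h.two_mul_mul_card_edgeFinset_le
  have total := congrArg (Nat.cast : ℕ → ℝ) G.card_edgeFinset_add_card_edgeFinset_compl
  push_cast [Nat.cast_choose_two] at total
  rcases le_total (Fintype.card V) r with hVr | hrV
  · simp [Nat.sub_eq_zero_of_le hVr]
  rw [← Nat.cast_le (α := ℝ)] at turan ⊢
  push_cast [Nat.cast_sub hrV, Nat.cast_sub hr] at turan ⊢
  nlinarith

variable (G) in
lemma card_cliqueFinset_two : #(G.cliqueFinset 2) = #G.edgeFinset := by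
  symm
  refine card_bij (fun e _ => e.toFinset) (fun e he => ?_) (fun e _ f _ h => ?_) (fun A hA => ?_)
  · induction e using Sym2.ind with | h a b => ?_
    rw [mem_edgeFinset, mem_edgeSet] at he
    rw [Sym2.toFinset_mk_eq, mem_cliqueFinset_iff, isNClique_iff, coe_pair, isClique_pair,
      card_pair he.ne]
    exact ⟨fun _ => he, rfl⟩
  · exact Sym2.ext fun x => by rw [← Sym2.mem_toFinset, h, Sym2.mem_toFinset]
  · obtain ⟨hA, hcard⟩ := G.isNClique_iff.1 (mem_cliqueFinset_iff.1 hA)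
    obtain ⟨a, b, hab, rfl⟩ := card_eq_two.1 hcard
    rw [coe_pair, isClique_pair] at hA
    exact ⟨s(a, b), by simpa using hA hab, Sym2.toFinset_mk_eq⟩

variable (G) in
lemma card_cliqueFinset_induce (s : Finset V) (n : ℕ) :
    #((G.induce s).cliqueFinset n) = #{A ∈ G.cliqueFinset n | A ⊆ s} := by
  rw [← card_map (mapEmbedding (Function.Embedding.subtype _)).toEmbedding]
  congr 1
  ext A
  simp only [Finset.mem_map, mem_cliqueFinset_iff, isNClique_induce_iff, mem_filter]
  constructor
  · rintro ⟨t, ht, rfl⟩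
    refine ⟨ht, fun x hx => ?_⟩
    obtain ⟨y, -, rfl⟩ := Finset.mem_map.1 hx
    exact y.2
  · rintro ⟨hA, hAs⟩
    have hmap : (A.subtype (· ∈ (s : Set V))).map (Function.Embedding.subtype _) = A :=
      subtype_map_of_mem fun x hx => mem_coe.2 (hAs hx)
    exact ⟨A.subtype (· ∈ (s : Set V)), by rwa [hmap], hmap⟩

theorem card_mul_sub_le_of_compl_cliqueFreeOn {r : ℕ} (hr : 0 < r) {s : Finset V}
    (h : Gᶜ.CliqueFreeOn s (r + 1)) :
    #s * (#s - r) ≤ 2 * r * #{A ∈ G.cliqueFinset 2 | A ⊆ s} := by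
  have hcompl : (G.induce s)ᶜ = Gᶜ.induce s := by
    ext a b
    simp only [compl_adj, comap_adj, Function.Embedding.subtype_apply, ne_eq, Subtype.ext_iff]
  have hfree : (G.induce s)ᶜ.CliqueFree (r + 1) := by
    rw [hcompl, cliqueFree_induce_iff]
    exact h
  have := card_mul_sub_le_of_compl_cliqueFree hr hfree
  rw [← card_cliqueFinset_two, card_cliqueFinset_induce] at this
  simpa only [Finset.coe_sort_coe, Fintype.card_coe] using this

theorem card_filter_not_exists_isNClique_compl_mul_le {r s : ℕ} (hr : 0 < r) (hs : 2 ≤ s) :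
    #{S ∈ powersetCard s univ | ¬ ∃ K ⊆ S, Gᶜ.IsNClique (r + 1) K} * (s * (s - r)) ≤
      2 * r * (#G.edgeFinset * (Fintype.card V - 2).choose (s - 2)) := by
  set bad := {S ∈ powersetCard s (univ : Finset V) | ¬ ∃ K ⊆ S, Gᶜ.IsNClique (r + 1) K}
  calc #bad * (s * (s - r)) = ∑ S ∈ bad, #S * (#S - r) := by
        rw [sum_const_nat fun S hS => by rw [(mem_powersetCard.1 (mem_filter.1 hS).1).2]]
    _ ≤ ∑ S ∈ bad, 2 * r * #{A ∈ G.cliqueFinset 2 | A ⊆ S} :=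
        sum_le_sum fun S hS => card_mul_sub_le_of_compl_cliqueFreeOn hr
          fun K hK hclique => (mem_filter.1 hS).2 ⟨K, coe_subset.1 hK, hclique⟩
    _ ≤ ∑ S ∈ powersetCard s univ, 2 * r * #{A ∈ G.cliqueFinset 2 | A ⊆ S} :=
        sum_le_sum_of_subset (filter_subset _ _)
    _ = 2 * r * (#G.edgeFinset * (Fintype.card V - 2).choose (s - 2)) := by
        rw [← mul_sum, sum_card_filter_subset_powersetCard
          (fun A hA => (mem_cliqueFinset_iff.1 hA).2) hs, card_cliqueFinset_two]

theorem choose_lt_mul_card_filter_exists_isNClique_compl {r s : ℕ} (hr : 0 < r) (hs : r ^ 2 < s)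
    (hsV : s ≤ Fintype.card V) (hG : (r + 1) * #G.edgeFinset < (Fintype.card V).choose 2) :
    (Fintype.card V).choose s <
      (r + 1) * (s - r) * #{S ∈ powersetCard s univ | ∃ K ⊆ S, Gᶜ.IsNClique (r + 1) K} := by
  set v := Fintype.card V
  set good := {S ∈ powersetCard s (univ : Finset V) | ∃ K ⊆ S, Gᶜ.IsNClique (r + 1) K}
  set bad := {S ∈ powersetCard s (univ : Finset V) | ¬ ∃ K ⊆ S, Gᶜ.IsNClique (r + 1) K}
  have hs2 : 2 ≤ s := by nlinarith
  have hsr : r < s := by nlinarith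
  have hsplit : #good + #bad = v.choose s := by
    rw [card_filter_add_card_filter_not, card_powersetCard, card_univ]
  have hQ : 0 < (v - 2).choose (s - 2) := Nat.choose_pos (by omega)
  have hchoose : v.choose s * s.choose 2 = v.choose 2 * (v - 2).choose (s - 2) :=
    Nat.choose_mul hs2
  have hs2' : s * (s - 1) = 2 * s.choose 2 := by
    rw [Nat.choose_two_right, Nat.mul_div_cancel' (Nat.even_mul_pred_self s).two_dvd]
  have hcount : (r + 1) * (s - r) * #bad < r * (s - 1) * v.choose s := by
    refine Nat.lt_of_mul_lt_mul_left (a := s) ?_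
    calc s * ((r + 1) * (s - r) * #bad) = (r + 1) * (#bad * (s * (s - r))) := by ring
      _ ≤ (r + 1) * (2 * r * (#G.edgeFinset * (v - 2).choose (s - 2))) :=
          Nat.mul_le_mul_left _ (card_filter_not_exists_isNClique_compl_mul_le hr hs2)
      _ = (r + 1) * #G.edgeFinset * (2 * r * (v - 2).choose (s - 2)) := by ring
      _ < v.choose 2 * (2 * r * (v - 2).choose (s - 2)) :=
          Nat.mul_lt_mul_of_pos_right hG (Nat.mul_pos (by omega) hQ)
      _ = 2 * r * (v.choose s * s.choose 2) := by rw [hchoose]; ring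
      _ = r * (s * (s - 1)) * v.choose s := by rw [hs2']; ring
      _ = s * (r * (s - 1) * v.choose s) := by ring
  have hs' : (r : ℤ) ^ 2 + 1 ≤ s := by exact_mod_cast hs
  have hbad : (#bad : ℤ) = v.choose s - #good := by omega
  zify [hsr.le, (by omega : 1 ≤ s)] at hcount ⊢
  rw [hbad] at hcount
  linarith [mul_nonneg (sub_nonneg.2 hs') (Nat.cast_nonneg (α := ℤ) (v.choose s))]

end SimpleGraph

def colorGraph {V κ : Type*} (χ : Sym2 V → κ) (c : κ) : SimpleGraph V :=
  SimpleGraph.fromEdgeSet (χ ⁻¹' {c})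

section ColorGraph

variable {V κ : Type*} {χ : Sym2 V → κ} {c : κ}

@[simp]
lemma colorGraph_adj {a b : V} : (colorGraph χ c).Adj a b ↔ χ s(a, b) = c ∧ a ≠ b := Iff.rfl

instance [DecidableEq V] [DecidableEq κ] : DecidableRel (colorGraph χ c).Adj :=
  fun _ _ => decidable_of_iff' _ colorGraph_adj

lemma edgeSet_colorGraph : (colorGraph χ c).edgeSet = {e | ¬ e.IsDiag ∧ χ e = c} := by
  ext e
  simp [colorGraph, SimpleGraph.edgeSet_fromEdgeSet, and_comm]

end ColorGraph

theorem factorial_mul_card_cliqueFinset_le_colorCopies {n c t : ℕ} (χ : Sym2 (Fin n) → Fin c)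
    (col : Fin c) :
    t.factorial * #((colorGraph χ col).cliqueFinset t) ≤
      colorCopies (⊤ : SimpleGraph (Fin t)) χ col := by
  set F : Finset (Fin t → Fin n) :=
    {f | Function.Injective f ∧ ∀ v w, v ≠ w → χ s(f v, f w) = col}
  have hF : colorCopies (⊤ : SimpleGraph (Fin t)) χ col = #F := by
    rw [colorCopies, colorCopiesIn, ← Set.ncard_coe_finset]
    congr
    ext f
    simp [F]
  have hfiber : ∀ A ∈ (colorGraph χ col).cliqueFinset t,
      t.factorial ≤ #{f ∈ F | univ.image f = A} := by
    intro A hA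
    obtain ⟨hAclique, hAcard⟩ := SimpleGraph.mem_cliqueFinset_iff.1 hA
    have e₀ : Fin t ≃ A := (Fintype.equivFinOfCardEq (by rw [Fintype.card_coe, hAcard])).symm
    calc t.factorial = #(univ : Finset (Fin t ≃ A)) := by
          rw [card_univ, Fintype.card_equiv e₀, Fintype.card_fin]
      _ ≤ _ := by
        refine card_le_card_of_injOn (fun e i => (e i : Fin n)) (fun e _ => ?_)
          (fun e _ e' _ h => Equiv.ext fun i => Subtype.ext (congrFun h i))
        have hinj : Function.Injective fun i => (e i : Fin n) :=
          Subtype.val_injective.comp e.injective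
        refine mem_filter.2 ⟨mem_filter.2 ⟨mem_univ _, hinj, fun v w hvw => ?_⟩, ?_⟩
        · exact (colorGraph_adj.1 (hAclique (e v).2 (e w).2 (hinj.ne hvw))).1
        · ext x
          simp only [mem_image, mem_univ, true_and]
          exact ⟨fun ⟨i, hi⟩ => hi ▸ (e i).2, fun hx => ⟨e.symm ⟨x, hx⟩, by simp⟩⟩
  have hmaps : Set.MapsTo (fun f => univ.image f) (F : Set (Fin t → Fin n))
      ((colorGraph χ col).cliqueFinset t : Set (Finset (Fin n))) := by
    intro f hf
    obtain ⟨hinj, hcol⟩ := (mem_filter.1 hf).2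
    refine SimpleGraph.mem_cliqueFinset_iff.2
      ⟨?_, by rw [card_image_of_injective _ hinj, card_fin]⟩
    intro x hx y hy hxy
    obtain ⟨v, -, rfl⟩ := mem_image.1 hx
    obtain ⟨w, -, rfl⟩ := mem_image.1 hy
    exact colorGraph_adj.2 ⟨hcol v w fun h => hxy (h ▸ rfl), hxy⟩
  rw [hF, card_eq_sum_card_fiberwise hmaps, mul_comm, ← smul_eq_mul, ← sum_const]
  exact sum_le_sum hfiber

def RamseyProperty (k l N : ℕ) : Prop :=
  ∀ χ : Sym2 (Fin N) → Fin 2,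
    (∃ A : Finset (Fin N), A.card = k ∧ ∀ i ∈ A, ∀ j ∈ A, i ≠ j → χ s(i, j) = 0) ∨
      (∃ B : Finset (Fin N), B.card = l ∧ ∀ i ∈ B, ∀ j ∈ B, i ≠ j → χ s(i, j) = 1)

lemma ramsey2_eq_sInf (k l : ℕ) : ramsey2 k l = sInf {N | RamseyProperty k l N} := rfl

namespace RamseyProperty

variable {k l N : ℕ}

lemma left_le (h : RamseyProperty k l N) (hl : 2 ≤ l) : k ≤ N := by
  rcases h fun _ => 0 with ⟨A, hA, -⟩ | ⟨B, hB, hB1⟩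
  · simpa [hA] using A.card_le_univ
  · obtain ⟨i, hi, j, hj, hij⟩ := one_lt_card.1 (hB ▸ hl)
    exact absurd (hB1 i hi j hj hij) (by decide)

lemma right_le (h : RamseyProperty k l N) (hk : 2 ≤ k) : l ≤ N := by
  rcases h fun _ => 1 with ⟨A, hA, hA0⟩ | ⟨B, hB, -⟩
  · obtain ⟨i, hi, j, hj, hij⟩ := one_lt_card.1 (hA ▸ hk)
    exact absurd (hA0 i hi j hj hij) (by decide)
  · simpa [hB] using B.card_le_univ

theorem exists_isNClique_or {V : Type*} (h : RamseyProperty k l N) (G : SimpleGraph V)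
    {K : Finset V} (hK : #K = N) :
    (∃ B ⊆ K, G.IsNClique k B) ∨ ∃ B ⊆ K, Gᶜ.IsNClique l B := by
  classical
  let e : Fin N ↪ V := (Fintype.equivFinOfCardEq (by rw [Fintype.card_coe, hK]) :
    K ≃ Fin N).symm.toEmbedding.trans (Function.Embedding.subtype _)
  have hmap : ∀ (H : SimpleGraph V) (A : Finset (Fin N)),
      (∀ i ∈ A, ∀ j ∈ A, i ≠ j → H.Adj (e i) (e j)) →
        A.map e ⊆ K ∧ H.IsNClique #A (A.map e) := by
    intro H A hA
    refine ⟨fun x hx => ?_, ⟨fun x hx y hy hxy => ?_, card_map e⟩⟩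
    · obtain ⟨i, -, rfl⟩ := Finset.mem_map.1 hx
      exact Subtype.prop _
    · obtain ⟨i, hi, rfl⟩ := Finset.mem_map.1 hx
      obtain ⟨j, hj, rfl⟩ := Finset.mem_map.1 hy
      exact hA i hi j hj fun hij => hxy (hij ▸ rfl)
  let χ : Sym2 (Fin N) → Fin 2 := fun z => if z.map e ∈ G.edgeSet then 0 else 1
  rcases h χ with ⟨A, hAcard, hA⟩ | ⟨B, hBcard, hB⟩
  · refine Or.inl ⟨A.map e, hAcard ▸ hmap G A fun i hi j hj hij => ?_⟩
    simpa [χ] using hA i hi j hj hij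
  · refine Or.inr ⟨B.map e, hBcard ▸ hmap Gᶜ B fun i hi j hj hij => ?_⟩
    simpa [χ, hij] using hB i hi j hj hij

theorem exists_blue_or_red_clique {V : Type*} (h : RamseyProperty k l N) (χ : Sym2 V → Fin 3)
    {K : Finset V} (hK : (colorGraph χ 2)ᶜ.IsNClique N K) :
    (∃ B ⊆ K, (colorGraph χ 1).IsNClique k B) ∨
      ∃ B ⊆ K, (colorGraph χ 0).IsNClique l B := by
  refine (h.exists_isNClique_or (colorGraph χ 1) hK.card_eq).imp_right ?_
  rintro ⟨B, hBK, hB⟩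
  refine ⟨B, hBK, fun a ha b hb hab => ?_, hB.card_eq⟩
  have h1 := hB.isClique ha hb hab
  have h2 := hK.isClique (hBK ha) (hBK hb) hab
  simp only [SimpleGraph.compl_adj, colorGraph_adj, not_and, not_not] at h1 h2
  have hred : ∀ x : Fin 3, x ≠ 1 → x ≠ 2 → x = 0 := by decide
  exact colorGraph_adj.2 ⟨hred _ (fun h => hab (h1.2 h)) (fun h => hab (h2.2 h)), hab⟩

theorem card_filter_exists_isNClique_compl_le {V : Type*} [Fintype V] [DecidableEq V] {s : ℕ}
    (h : RamseyProperty k l N) (χ : Sym2 V → Fin 3) (hks : k ≤ s) (hls : l ≤ s) :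
    #{S ∈ powersetCard s univ | ∃ K ⊆ S, (colorGraph χ 2)ᶜ.IsNClique N K} ≤
      #((colorGraph χ 1).cliqueFinset k) * (Fintype.card V - k).choose (s - k) +
        #((colorGraph χ 0).cliqueFinset l) * (Fintype.card V - l).choose (s - l) := by
  have hsized {H : SimpleGraph V} [DecidableRel H.Adj] {t : ℕ} :
      ((H.cliqueFinset t : Finset (Finset V)) : Set (Finset V)).Sized t :=
    fun A hA => (SimpleGraph.mem_cliqueFinset_iff.1 hA).2
  set blue := (colorGraph χ 1).cliqueFinset k
  set red := (colorGraph χ 0).cliqueFinset l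
  calc _ ≤ ∑ S ∈ powersetCard s univ, (#{A ∈ blue | A ⊆ S} + #{A ∈ red | A ⊆ S}) := by
        rw [card_eq_sum_ones]
        refine (sum_le_sum fun S hS => ?_).trans (sum_le_sum_of_subset (filter_subset _ _))
        obtain ⟨K, hKS, hK⟩ := (mem_filter.1 hS).2
        rcases h.exists_blue_or_red_clique χ hK with ⟨B, hBK, hB⟩ | ⟨B, hBK, hB⟩
        · exact le_add_right (card_pos.2 ⟨B, mem_filter.2
            ⟨SimpleGraph.mem_cliqueFinset_iff.2 hB, hBK.trans hKS⟩⟩)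
        · exact le_add_left (card_pos.2 ⟨B, mem_filter.2
            ⟨SimpleGraph.mem_cliqueFinset_iff.2 hB, hBK.trans hKS⟩⟩)
    _ = _ := by
        rw [sum_add_distrib, sum_card_filter_subset_powersetCard hsized hks,
          sum_card_filter_subset_powersetCard hsized hls]

end RamseyProperty

theorem descFactorial_le_of_choose_le {n s t M B : ℕ} (hts : t ≤ s) (hsn : s ≤ n)
    (h : n.choose s ≤ M * (B * (n - t).choose (s - t))) :
    n.descFactorial t ≤ M * s.choose t * (t.factorial * B) := by
  have hchoose :
      n.choose t * (n - t).choose (s - t) ≤ M * s.choose t * B * (n - t).choose (s - t) :=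
    calc n.choose t * (n - t).choose (s - t) = n.choose s * s.choose t := (Nat.choose_mul hts).symm
      _ ≤ M * (B * (n - t).choose (s - t)) * s.choose t := Nat.mul_le_mul_right _ h
      _ = M * s.choose t * B * (n - t).choose (s - t) := by ring
  have := Nat.le_of_mul_le_mul_right hchoose (Nat.choose_pos (by omega))
  calc n.descFactorial t = t.factorial * n.choose t := Nat.descFactorial_eq_factorial_mul_choose n t
    _ ≤ t.factorial * (M * s.choose t * B) := Nat.mul_le_mul_left _ this
    _ = M * s.choose t * (t.factorial * B) := by ring

theorem descFactorial_le_colorCopies_or {n k l r s : ℕ} (hR : RamseyProperty k l (r + 1))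
    (hkr : k ≤ r + 1) (hlr : l ≤ r + 1) (hr : 0 < r) (hs : r ^ 2 < s) (hsn : s ≤ n)
    (χ : Sym2 (Fin n) → Fin 3) (hY : (r + 1) * #(colorGraph χ 2).edgeFinset < n.choose 2) :
    n.descFactorial k ≤
        2 * ((r + 1) * (s - r)) * s.choose k * colorCopies (⊤ : SimpleGraph (Fin k)) χ 1 ∨
      n.descFactorial l ≤
        2 * ((r + 1) * (s - r)) * s.choose l * colorCopies (⊤ : SimpleGraph (Fin l)) χ 0 := by
  have hrs : r + 1 ≤ s := by nlinarith
  have hmany := (colorGraph χ 2).choose_lt_mul_card_filter_exists_isNClique_compl hr hs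
    (by rwa [Fintype.card_fin]) (by rwa [Fintype.card_fin])
  have hcover := hR.card_filter_exists_isNClique_compl_le χ (hkr.trans hrs) (hlr.trans hrs)
  simp only [Fintype.card_fin] at hmany hcover
  set X := #((colorGraph χ 1).cliqueFinset k) * (n - k).choose (s - k)
  set Y := #((colorGraph χ 0).cliqueFinset l) * (n - l).choose (s - l)
  rcases le_total X Y with h | h
  · refine Or.inr ((descFactorial_le_of_choose_le (hlr.trans hrs) hsn ?_).trans
      (Nat.mul_le_mul_left _ (factorial_mul_card_cliqueFinset_le_colorCopies χ 0)))
    calc n.choose s ≤ (r + 1) * (s - r) * (X + Y) := (hmany.trans_le (by gcongr)).le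
      _ ≤ (r + 1) * (s - r) * (Y + Y) := Nat.mul_le_mul_left _ (Nat.add_le_add_right h Y)
      _ = 2 * ((r + 1) * (s - r)) * Y := by ring
  · refine Or.inl ((descFactorial_le_of_choose_le (hkr.trans hrs) hsn ?_).trans
      (Nat.mul_le_mul_left _ (factorial_mul_card_cliqueFinset_le_colorCopies χ 1)))
    calc n.choose s ≤ (r + 1) * (s - r) * (X + Y) := (hmany.trans_le (by gcongr)).le
      _ ≤ (r + 1) * (s - r) * (X + X) := Nat.mul_le_mul_left _ (Nat.add_le_add_left h X)
      _ = 2 * ((r + 1) * (s - r)) * X := by ring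

theorem statement15 (k l : ℕ) (hk : 2 ≤ k) (hl : 2 ≤ l) :
    ∃ γ : ℝ, 0 < γ ∧ ∃ N : ℕ, ∀ n ≥ N, ∀ χ : Sym2 (Fin n) → Fin 3,
      (Set.ncard {e : Sym2 (Fin n) | ¬ e.IsDiag ∧ χ e = 2} : ℝ) <
          (1 / (ramsey2 k l : ℝ)) * (n.choose 2 : ℝ) →
      γ * (n.descFactorial k : ℝ) ≤ (colorCopies (⊤ : SimpleGraph (Fin k)) χ 1 : ℝ) ∨
      γ * (n.descFactorial l : ℝ) ≤ (colorCopies (⊤ : SimpleGraph (Fin l)) χ 0 : ℝ) := by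
  by_cases hfinite : {N | RamseyProperty k l N}.Nonempty
  swap
  -- junk value: `ramsey2 k l = sInf ∅ = 0`, so the hypothesis on yellow edges is `_ < 0`
  · refine ⟨1, one_pos, 0, fun n _ χ hχ => absurd hχ (not_lt.2 ?_)⟩
    rw [ramsey2_eq_sInf, Set.not_nonempty_iff_eq_empty.1 hfinite, Nat.sInf_empty]
    simp
  have hR : RamseyProperty k l (ramsey2 k l) := Nat.sInf_mem hfinite
  obtain ⟨r, hr⟩ : ∃ r, ramsey2 k l = r + 1 :=
    Nat.exists_eq_add_one.2 (by have := hR.left_le hl; omega)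
  rw [hr] at hR ⊢
  have hkr := hR.left_le hl
  have hlr := hR.right_le hk
  set s := (r + 1) ^ 2
  have hs : r ^ 2 < s := Nat.pow_lt_pow_left r.lt_succ_self two_ne_zero
  have hrs : r + 1 ≤ s := Nat.le_self_pow two_ne_zero _
  set M := 2 * ((r + 1) * (s - r)) * (s.choose k + s.choose l)
  have hM : 0 < M := Nat.mul_pos (Nat.mul_pos two_pos (Nat.mul_pos r.succ_pos (by omega)))
    (Nat.add_pos_left (Nat.choose_pos (by omega)) _)
  refine ⟨1 / M, by positivity, s, fun n hn χ hχ => ?_⟩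
  have hY : (r + 1) * #(colorGraph χ 2).edgeFinset < n.choose 2 := by
    rw [← edgeSet_colorGraph, ← SimpleGraph.coe_edgeFinset, Set.ncard_coe_finset, one_div,
      inv_mul_eq_div, lt_div_iff₀ (by positivity), mul_comm] at hχ
    exact_mod_cast hχ
  refine (descFactorial_le_colorCopies_or hR hkr hlr (by omega) hs hn χ hY).imp
    (fun h => ?_) (fun h => ?_) <;>
  · rw [one_div_mul_eq_div, div_le_iff₀ (by exact_mod_cast hM), mul_comm]
    exact_mod_cast h.trans (Nat.mul_le_mul_right _ (Nat.mul_le_mul_left _ (by omega)))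
end

section
/- Let H_1, H_2, H_3 be graphs on h_1, h_2, h_3 vertices respectively, with h_1, h_2, h_3 ≤ h. For any n ≥ 27^{h²}, any 3-coloring of E(K_n) with colors red, blue, and yellow contains at least 27^{−h²}·(n)_{h_1} red labeled copies of H_1, or at least 27^{−h²}·(n)_{h_2} blue labeled copies of H_2, or at least 27^{−h²}·(n)_{h_3} yellow labeled copies of H_3. -/
open Filter

/-!
By the multicolour Ramsey bound, every 3-coloured complete graph on `t = 3 ^ (3h - 2)` vertices
contains a monochromatic `K_h`. Every labeled `K_t` in `K_n` thus contains a monochromatic labeled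
`K_h` in one of `(t)_h` positions, while each labeled `K_h` extends to only `(n - h)_{t - h}`
labeled `K_t`'s; double counting gives `(n)_h / (t)_h` monochromatic labeled `K_h`'s, and some
colour `c` carries a third of them. Restricting such a clique to its first `h_c` vertices gives a
`c`-coloured copy of `H_c`, and every copy arises from at most `(n - h_c)_{h - h_c}` cliques, so
there are at least `(n)_{h_c} / (3 t^h) ≥ 27^{-h²} (n)_{h_c}` of them.
-/

open Finset

theorem card_embedding_extending_le {β γ α : Type*} [Fintype β] [Fintype γ] [Fintype α]
    [DecidableEq γ] [DecidableEq α] (ι : β ↪ γ) (g : β → α) :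
    #{f : γ ↪ α | ∀ b, f (ι b) = g b} ≤
      (Fintype.card α - Fintype.card β).descFactorial (Fintype.card γ - Fintype.card β) := by
  obtain hempty | ⟨f₀, hf₀⟩ := eq_empty_or_nonempty {f : γ ↪ α | ∀ b, f (ι b) = g b}
  · simp [hempty]
  have hf₀ : ∀ b, f₀ (ι b) = g b := (mem_filter.1 hf₀).2
  have hg : Function.Injective g := fun a b hab => ι.injective (f₀.injective (by simp [hf₀, hab]))
  let restrict (f : {f : γ ↪ α // ∀ b, f (ι b) = g b}) :
      {x // x ∉ Set.range ι} ↪ {z // z ∉ Set.range g} :=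
    ⟨fun x => ⟨f.1 x, by
      rintro ⟨b, hb⟩
      exact x.2 ⟨b, f.1.injective (by rw [f.2, hb])⟩⟩,
     fun x y hxy => Subtype.ext (f.1.injective (congrArg Subtype.val hxy))⟩
  have hrestrict : Function.Injective restrict := by
    rintro ⟨f, hf⟩ ⟨f', hf'⟩ hff'
    ext x
    by_cases hx : x ∈ Set.range ι
    · obtain ⟨b, rfl⟩ := hx
      rw [hf, hf']
    · exact congrArg Subtype.val (DFunLike.congr_fun hff' ⟨x, hx⟩)
  calc #{f : γ ↪ α | ∀ b, f (ι b) = g b}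
      = Fintype.card {f : γ ↪ α // ∀ b, f (ι b) = g b} := (Fintype.card_subtype _).symm
    _ ≤ Fintype.card ({x // x ∉ Set.range ι} ↪ {z // z ∉ Set.range g}) :=
      Fintype.card_le_of_injective _ hrestrict
    _ = (Fintype.card α - Fintype.card β).descFactorial (Fintype.card γ - Fintype.card β) := by
      simp only [Fintype.card_embedding_eq, Fintype.card_subtype_compl, Fintype.card_range,
        Set.card_range_of_injective hg]

theorem card_le_card_mul_descFactorial_of_restrict_mem {β γ α : Type*} [Fintype β] [Fintype γ]
    [Fintype α] (ι : β ↪ γ) {S : Finset (γ ↪ α)} {R : Finset (β → α)}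
    (hSR : ∀ f ∈ S, ⇑(ι.trans f) ∈ R) :
    #S ≤ #R * (Fintype.card α - Fintype.card β).descFactorial
      (Fintype.card γ - Fintype.card β) := by
  classical
  rw [mul_comm]
  refine card_le_mul_card_image_of_maps_to hSR _ fun g _ => ?_
  refine (card_le_card fun f hf => ?_).trans (card_embedding_extending_le ι g)
  obtain ⟨-, rfl⟩ := mem_filter.1 hf
  simp

-- The multicolour Ramsey bound `R(s₁, …, s_k) ≤ k ^ (∑ sᵢ - k + 1)`, phrased without truncated
-- subtraction.
theorem exists_monochromatic_subset_of_pow_le_card {V κ : Type*} [Fintype κ] [Nontrivial κ]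
    (χ : Sym2 V → κ) (s : κ → ℕ) (m : ℕ) (hm : ∑ i, s i ≤ m + Fintype.card κ)
    (S : Finset V) (hS : Fintype.card κ ^ (m + 1) ≤ #S) :
    ∃ i, ∃ T ⊆ S, #T = s i ∧ (T : Set V).Pairwise fun v w => χ s(v, w) = i := by
  classical
  induction m using Nat.strong_induction_on generalizing s S with
  | _ m ih =>
  have hk : 2 ≤ Fintype.card κ := Fintype.one_lt_card
  have hS₁ : 1 ≤ #S := (Nat.one_le_pow _ _ (by omega)).trans hS
  by_cases hsmall : ∃ i, s i ≤ 1
  · obtain ⟨i, hi⟩ := hsmall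
    obtain ⟨T, hTS, hT⟩ := exists_subset_card_eq (hi.trans hS₁)
    exact ⟨i, T, hTS, hT, fun a ha b hb hab => absurd (card_le_one.1 (hT ▸ hi) a ha b hb) hab⟩
  push Not at hsmall
  obtain ⟨m, rfl⟩ : ∃ m', m = m' + 1 := by
    have : ∑ _i : κ, 2 ≤ ∑ i, s i := sum_le_sum fun i _ => hsmall i
    simp only [sum_const, card_univ, smul_eq_mul] at this
    exact ⟨m - 1, by omega⟩
  obtain ⟨v, hv⟩ := card_pos.1 hS₁
  obtain ⟨i, -, hi⟩ := exists_lt_card_fiber_of_mul_lt_card_of_maps_to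
    (s := S.erase v) (t := univ) (f := fun w => χ s(v, w)) (n := Fintype.card κ ^ (m + 1) - 1)
    (fun _ _ => mem_univ _) (by
      rw [card_univ, card_erase_of_mem hv, Nat.mul_sub_one, ← pow_succ']
      have := Nat.le_self_pow (n := m + 1 + 1) (by omega) (Fintype.card κ)
      omega)
  set P := {w ∈ S.erase v | χ s(v, w) = i}
  have hPS : P ⊆ S := (filter_subset _ _).trans (erase_subset _ _)
  set s' := Function.update s i (s i - 1) with hs'_def
  have hs' : ∑ j, s' j + 1 = ∑ j, s j := by
    have := hsmall i
    rw [sum_update_of_mem (mem_univ i), ← add_sum_erase _ _ (mem_univ i), sdiff_singleton_eq_erase]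
    omega
  obtain ⟨j, T, hTP, hT, hTmono⟩ := ih m (by omega) s' (by omega) P (by omega)
  by_cases hji : j = i
  · subst hji
    have hvT : v ∉ T := fun hvT => by simpa [P] using hTP hvT
    refine ⟨j, insert v T, insert_subset hv (hTP.trans hPS), ?_, ?_⟩
    · rw [card_insert_of_notMem hvT, hT, hs'_def, Function.update_self]
      have := hsmall j
      omega
    · rw [coe_insert, Set.pairwise_insert]
      refine ⟨hTmono, fun w hw _ => ?_⟩
      have hvw : χ s(v, w) = j := (mem_filter.1 (hTP hw)).2
      exact ⟨hvw, Sym2.eq_swap ▸ hvw⟩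
  · exact ⟨j, T, hTP.trans hPS, by rw [hT, hs'_def, Function.update_of_ne hji], hTmono⟩

noncomputable def cliqueEmbeddings {V κ : Type*} [Fintype V] (χ : Sym2 V → κ) (c : κ) (γ : Type*)
    [Fintype γ] : Finset (γ ↪ V) :=
  open Classical in {g | Pairwise fun a b => χ s(g a, g b) = c}

theorem mem_cliqueEmbeddings {V κ γ : Type*} [Fintype V] [Fintype γ] {χ : Sym2 V → κ} {c : κ}
    {g : γ ↪ V} : g ∈ cliqueEmbeddings χ c γ ↔ Pairwise fun a b => χ s(g a, g b) = c := by
  simp [cliqueEmbeddings]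

section Supersaturation

variable {V κ : Type*} [Fintype V] [Fintype κ]

theorem descFactorial_card_le_mul_sum_card_cliqueEmbeddings {τ γ : Type*} [Fintype τ]
    [Fintype γ] (χ : Sym2 V → κ) (hτ : Fintype.card τ ≤ Fintype.card V)
    (hτγ : ∀ f : τ ↪ V, ∃ c, ∃ σ : γ ↪ τ, σ.trans f ∈ cliqueEmbeddings χ c γ) :
    (Fintype.card V).descFactorial (Fintype.card γ) ≤
      (Fintype.card τ).descFactorial (Fintype.card γ) * ∑ c, #(cliqueEmbeddings χ c γ) := by
  classical
  obtain ⟨f₀⟩ := Function.Embedding.nonempty_of_card_le hτ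
  obtain ⟨-, σ₀, -⟩ := hτγ f₀
  have hγτ := Fintype.card_le_of_embedding σ₀
  set M := univ.biUnion fun c => (cliqueEmbeddings χ c γ).image (⇑)
  set D := (Fintype.card V - Fintype.card γ).descFactorial (Fintype.card τ - Fintype.card γ)
  have hD : 0 < D := Nat.descFactorial_pos.2 (by omega)
  refine Nat.le_of_mul_le_mul_right ?_ hD
  calc (Fintype.card V).descFactorial (Fintype.card γ) * D = #(univ : Finset (τ ↪ V)) := by
        rw [mul_comm, Nat.descFactorial_mul_descFactorial hγτ, card_univ,
          Fintype.card_embedding_eq]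
    _ ≤ ∑ σ : γ ↪ τ, #{f : τ ↪ V | ⇑(σ.trans f) ∈ M} := by
        refine (card_le_card fun f _ => ?_).trans card_biUnion_le
        obtain ⟨c, σ, hσ⟩ := hτγ f
        exact mem_biUnion.2 ⟨σ, mem_univ _,
          mem_filter.2 ⟨mem_univ _, mem_biUnion.2 ⟨c, mem_univ _, mem_image_of_mem _ hσ⟩⟩⟩
    _ ≤ ∑ σ : γ ↪ τ, #M * D :=
        sum_le_sum fun σ _ =>
          card_le_card_mul_descFactorial_of_restrict_mem σ fun f hf => (mem_filter.1 hf).2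
    _ = (Fintype.card τ).descFactorial (Fintype.card γ) * #M * D := by
        rw [sum_const, card_univ, Fintype.card_embedding_eq, smul_eq_mul, mul_assoc]
    _ ≤ ((Fintype.card τ).descFactorial (Fintype.card γ) *
          ∑ c, #(cliqueEmbeddings χ c γ)) * D := by
        gcongr
        exact card_biUnion_le.trans (sum_le_sum fun c _ => card_image_le)

theorem exists_embedding_trans_mem_cliqueEmbeddings [Nontrivial κ] (χ : Sym2 V → κ) {h m t : ℕ}
    (hm : Fintype.card κ * h ≤ m + Fintype.card κ) (ht : Fintype.card κ ^ (m + 1) ≤ t)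
    (f : Fin t ↪ V) : ∃ c, ∃ σ : Fin h ↪ Fin t, σ.trans f ∈ cliqueEmbeddings χ c (Fin h) := by
  obtain ⟨c, T, -, hT, hTc⟩ := exists_monochromatic_subset_of_pow_le_card (χ ∘ Sym2.map f)
    (fun _ => h) m (by simpa using hm) univ (by simpa using ht)
  refine ⟨c, (T.orderEmbOfFin hT).toEmbedding, mem_cliqueEmbeddings.2 fun a b hab => ?_⟩
  simpa [Sym2.map_mk] using
    hTc (T.orderEmbOfFin_mem hT a) (T.orderEmbOfFin_mem hT b) (by simpa using hab)

theorem exists_descFactorial_card_le_mul_card_cliqueEmbeddings [Nontrivial κ] (χ : Sym2 V → κ)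
    {h m : ℕ} (hm : Fintype.card κ * h ≤ m + Fintype.card κ)
    (hV : Fintype.card κ ^ (m + 1) ≤ Fintype.card V) :
    ∃ c, (Fintype.card V).descFactorial h ≤
      Fintype.card κ * (Fintype.card κ ^ (m + 1)).descFactorial h *
        #(cliqueEmbeddings χ c (Fin h)) := by
  classical
  have hsum := descFactorial_card_le_mul_sum_card_cliqueEmbeddings (τ := Fin _) (γ := Fin h) χ
    (by simpa using hV) (exists_embedding_trans_mem_cliqueEmbeddings χ hm le_rfl)
  simp only [Fintype.card_fin] at hsum
  obtain ⟨c, -, hc⟩ := exists_le_of_sum_le univ_nonempty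
    (f := fun _ => (Fintype.card V).descFactorial h)
    (g := fun c => Fintype.card κ * (Fintype.card κ ^ (m + 1)).descFactorial h *
      #(cliqueEmbeddings χ c (Fin h))) (by
        simp only [sum_const, card_univ, smul_eq_mul, mul_assoc, ← mul_sum]
        exact Nat.mul_le_mul_left _ hsum)
  exact ⟨c, hc⟩

end Supersaturation

theorem colorCopies_pos_of_isEmpty {α : Type*} [Fintype α] [IsEmpty α] (F : SimpleGraph α)
    {n k : ℕ} (χ : Sym2 (Fin n) → Fin k) (c : Fin k) : 0 < colorCopies F χ c :=
  (Set.ncard_pos (Set.toFinite _)).2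
    ⟨isEmptyElim, fun a => isEmptyElim a, fun a => isEmptyElim a, fun a => isEmptyElim a⟩

theorem card_cliqueEmbeddings_le_colorCopies_mul {β γ : Type*} [Fintype β] [Fintype γ]
    {n k : ℕ} (χ : Sym2 (Fin n) → Fin k) (c : Fin k) (H : SimpleGraph β) (ι : β ↪ γ) :
    #(cliqueEmbeddings χ c γ) ≤
      colorCopies H χ c * (n - Fintype.card β).descFactorial (Fintype.card γ - Fintype.card β) := by
  classical
  have hfin := Set.toFinite {f : β → Fin n | Function.Injective f ∧ (∀ v, f v ∈ Set.univ) ∧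
    ∀ v w, H.Adj v w → χ s(f v, f w) = c}
  have := card_le_card_mul_descFactorial_of_restrict_mem ι (S := cliqueEmbeddings χ c γ)
    (R := hfin.toFinset) fun g hg => hfin.mem_toFinset.2
      ⟨(ι.trans g).injective, fun _ => trivial,
        fun v w hvw => mem_cliqueEmbeddings.1 hg (ι.injective.ne hvw.ne)⟩
  rwa [Fintype.card_fin, ← Set.ncard_eq_toFinset_card] at this

theorem three_mul_descFactorial_le {h : ℕ} (hh : 1 ≤ h) :
    3 * (3 ^ (3 * (h - 1) + 1)).descFactorial h ≤ 27 ^ (h ^ 2) := calc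
  _ ≤ 3 * (3 ^ (3 * (h - 1) + 1)) ^ h := Nat.mul_le_mul_left _ (Nat.descFactorial_le_pow _ _)
  _ = 3 ^ (1 + (3 * (h - 1) + 1) * h) := by rw [← pow_mul, ← pow_succ', add_comm]
  _ ≤ 3 ^ (3 * h ^ 2) := by
      refine Nat.pow_le_pow_right (by norm_num) ?_
      obtain ⟨j, rfl⟩ := Nat.exists_eq_add_of_le' hh
      simp only [Nat.add_sub_cancel]
      nlinarith
  _ = 27 ^ (h ^ 2) := by rw [pow_mul]; norm_num

theorem pow_neg_mul_descFactorial_le_colorCopies {n h k : ℕ} (χ : Sym2 (Fin n) → Fin 3)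
    (c : Fin 3) (H : SimpleGraph (Fin k)) (hk : k ≤ h) (hh : 1 ≤ h) (hn : h ≤ n)
    (hc : n.descFactorial h ≤
      3 * (3 ^ (3 * (h - 1) + 1)).descFactorial h * #(cliqueEmbeddings χ c (Fin h))) :
    (27 : ℝ) ^ (-(h ^ 2 : ℤ)) * n.descFactorial k ≤ colorCopies H χ c := by
  set D := (n - k).descFactorial (h - k)
  have hD : 0 < D := Nat.descFactorial_pos.2 (by omega)
  have hcopies : n.descFactorial k ≤ 27 ^ (h ^ 2) * colorCopies H χ c := by
    refine Nat.le_of_mul_le_mul_left ?_ hD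
    calc D * n.descFactorial k = n.descFactorial h := Nat.descFactorial_mul_descFactorial hk
      _ ≤ 3 * (3 ^ (3 * (h - 1) + 1)).descFactorial h * #(cliqueEmbeddings χ c (Fin h)) := hc
      _ ≤ 27 ^ (h ^ 2) * (colorCopies H χ c * D) := by
        gcongr
        · exact three_mul_descFactorial_le hh
        · simpa using card_cliqueEmbeddings_le_colorCopies_mul χ c H (Fin.castLEEmb hk)
      _ = D * (27 ^ (h ^ 2) * colorCopies H χ c) := by ring
  rw [zpow_neg, inv_mul_le_iff₀ (by positivity)]
  exact_mod_cast hcopies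

theorem statement16 (h h1 h2 h3 : ℕ) (hh1 : h1 ≤ h) (hh2 : h2 ≤ h) (hh3 : h3 ≤ h)
    (H1 : SimpleGraph (Fin h1)) (H2 : SimpleGraph (Fin h2)) (H3 : SimpleGraph (Fin h3))
    (n : ℕ) (hn : 27 ^ (h ^ 2) ≤ n) (χ : Sym2 (Fin n) → Fin 3) :
    (27 : ℝ) ^ (-(h ^ 2 : ℤ)) * (n.descFactorial h1 : ℝ) ≤ (colorCopies H1 χ 0 : ℝ) ∨
    (27 : ℝ) ^ (-(h ^ 2 : ℤ)) * (n.descFactorial h2 : ℝ) ≤ (colorCopies H2 χ 1 : ℝ) ∨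
    (27 : ℝ) ^ (-(h ^ 2 : ℤ)) * (n.descFactorial h3 : ℝ) ≤ (colorCopies H3 χ 2 : ℝ) := by
  rcases Nat.eq_zero_or_pos h with rfl | hh
  · obtain rfl : h1 = 0 := Nat.le_zero.1 hh1
    left
    simpa [Nat.one_le_iff_ne_zero, ← Nat.pos_iff_ne_zero] using colorCopies_pos_of_isEmpty H1 χ 0
  have htn : 3 ^ (3 * (h - 1) + 1) ≤ n := calc
    _ ≤ 3 ^ (3 * h ^ 2) :=
      Nat.pow_le_pow_right (by norm_num) (by have := Nat.le_self_pow two_ne_zero h; omega)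
    _ = 27 ^ (h ^ 2) := by rw [pow_mul]; norm_num
    _ ≤ n := hn
  obtain ⟨c, hc⟩ := exists_descFactorial_card_le_mul_card_cliqueEmbeddings χ (h := h)
    (m := 3 * (h - 1)) (by simp only [Fintype.card_fin]; omega) (by simpa using htn)
  simp only [Fintype.card_fin] at hc
  have hhn : h ≤ n := calc
    h ≤ 3 ^ (3 * (h - 1) + 1) := (Nat.lt_pow_self (by norm_num)).le.trans
      (Nat.pow_le_pow_right (by norm_num) (by omega))
    _ ≤ n := htn
  have hcopies {k : ℕ} (H : SimpleGraph (Fin k)) (hk : k ≤ h) :=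
    pow_neg_mul_descFactorial_le_colorCopies χ c H hk hh hhn hc
  fin_cases c
  exacts [Or.inl (hcopies H1 hh1), Or.inr (Or.inl (hcopies H2 hh2)),
    Or.inr (Or.inr (hcopies H3 hh3))]
end

section
/- Let k ≥ 3 be an integer and r = r(k,k). The following statements are equivalent: (i) there exists a 2-coloring of E(K_{r−2}) which extends to two distinct 2-colorings of E(K_{r−1}), neither of which contains a monochromatic K_k; (ii) for every s ≥ 2, there exists a mixed blowup coloring of K_{r−1}[s]; (iii) there exists a mixed blowup coloring of K_{r−1}[2]. -/
open Filter

/-- The complete multipartite graph `K_m[s]` with `m` parts of size `s`. -/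
def blowupGraph (m s : ℕ) : SimpleGraph (Fin m × Fin s) :=
  SimpleGraph.comap Prod.fst (⊤ : SimpleGraph (Fin m))

/-- `Red` (together with its complement inside the blowup) is a mixed blowup coloring of
`K_{r(k,k)-1}[s]`: a 2-coloring of the edges of the blowup with no monochromatic `K_k`
which is not the blowup of a Ramsey coloring of `K_{r(k,k)-1}`. -/
noncomputable def IsMixedBlowup (k s : ℕ)
    (Red : SimpleGraph (Fin (ramsey2 k k - 1) × Fin s)) : Prop :=
  Red ≤ blowupGraph (ramsey2 k k - 1) s ∧
  Red.CliqueFree k ∧ (blowupGraph (ramsey2 k k - 1) s \ Red).CliqueFree k ∧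
  ¬ ∃ G : SimpleGraph (Fin (ramsey2 k k - 1)),
      G.CliqueFree k ∧ Gᶜ.CliqueFree k ∧
      ∀ (i j : Fin (ramsey2 k k - 1)) (a b : Fin s),
        Red.Adj (i, a) (j, b) ↔ (i ≠ j ∧ G.Adj i j)

/-- There is a 2-coloring of `E(K_{r-2})` which extends to two distinct Ramsey colorings
of `E(K_{r-1})` (colorings are encoded by their red graphs). -/
noncomputable def ExtendsInTwoWays (k : ℕ) : Prop :=
  ∃ G₁ G₂ : SimpleGraph (Fin (ramsey2 k k - 1)), G₁ ≠ G₂ ∧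
    G₁.CliqueFree k ∧ G₁ᶜ.CliqueFree k ∧ G₂.CliqueFree k ∧ G₂ᶜ.CliqueFree k ∧
    ∀ i j : Fin (ramsey2 k k - 1),
      i.val < ramsey2 k k - 2 → j.val < ramsey2 k k - 2 → (G₁.Adj i j ↔ G₂.Adj i j)

/-!
Encode a red/blue colouring of `E(K_{r-1}[s])` by its red graph `Red` on `V × S`. Choosing one
vertex `(i, a i)` in every part gives a colouring of `E(K_{r-1})`, the transversal at `a`. Every
clique of the blowup has at most one vertex per part, so it lies in a transversal: the colouring has
no monochromatic `K_k` iff all its transversals are Ramsey colourings, and it is a blowup iff all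
its transversals coincide. If two transversals differ, then already two transversals differing in a
single part `v` differ, and they agree off `v`; moving `v` to the last position gives a colouring of
`E(K_{r-2})` with two Ramsey extensions. Conversely, from two Ramsey colourings agreeing off `v`,
colour the edges at copy `0` of part `v` by the first and those at the other copies by the second.
-/

namespace SimpleGraph

variable {V W S : Type*}

def IsRamsey (k : ℕ) (G : SimpleGraph V) : Prop :=
  G.CliqueFree k ∧ Gᶜ.CliqueFree k

lemma IsRamsey.of_embedding {k : ℕ} {G : SimpleGraph V} {H : SimpleGraph W} (f : G ↪g H)
    (hH : H.IsRamsey k) : G.IsRamsey k :=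
  ⟨hH.1.comap f.isContained, hH.2.comap (Embedding.complEquiv f).isContained⟩

def transversal (Red : SimpleGraph (V × S)) (a : V → S) : SimpleGraph V :=
  Red.comap fun i => (i, a i)

@[simp]
lemma transversal_adj (Red : SimpleGraph (V × S)) (a : V → S) (x y : V) :
    (Red.transversal a).Adj x y ↔ Red.Adj (x, a x) (y, a y) :=
  Iff.rfl

def transversalEmbedding (Red : SimpleGraph (V × S)) (a : V → S) : Red.transversal a ↪g Red :=
  Embedding.comap ⟨fun i => (i, a i), fun _ _ h => congrArg Prod.fst h⟩ Red

lemma transversal_sdiff (Red : SimpleGraph (V × S)) (a : V → S) :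
    (((⊤ : SimpleGraph V).comap Prod.fst) \ Red).transversal a = (Red.transversal a)ᶜ := by
  ext x y
  simp

lemma cliqueFree_of_forall_transversal [Nonempty S] {k : ℕ} {Red : SimpleGraph (V × S)}
    (hRed : Red ≤ (⊤ : SimpleGraph V).comap Prod.fst)
    (h : ∀ a, (Red.transversal a).CliqueFree k) : Red.CliqueFree k := by
  classical
  intro t ht
  have hinj : Set.InjOn Prod.fst (t : Set (V × S)) := fun u hu w hw huw => by
    by_contra hne
    exact hRed (ht.1 hu hw hne) huw
  let a : V → S := fun i =>
    if hi : ∃ u ∈ t, u.1 = i then hi.choose.2 else Classical.arbitrary S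
  have ha : ∀ u ∈ t, a u.1 = u.2 := fun u hu => by
    have hex : ∃ w ∈ t, w.1 = u.1 := ⟨u, hu, rfl⟩
    simp only [a, dif_pos hex]
    rw [hinj hex.choose_spec.1 hu hex.choose_spec.2]
  refine h a (t.image Prod.fst) ⟨?_, by rw [Finset.card_image_of_injOn hinj, ht.2]⟩
  simp only [Finset.coe_image]
  rintro _ ⟨u, hu, rfl⟩ _ ⟨w, hw, rfl⟩ huw
  rw [transversal_adj, ha u hu, ha w hw]
  exact ht.1 hu hw (ne_of_apply_ne Prod.fst huw)

def IsBlowupOf (Red : SimpleGraph (V × S)) (G : SimpleGraph V) : Prop :=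
  ∀ i j a b, Red.Adj (i, a) (j, b) ↔ i ≠ j ∧ G.Adj i j

lemma isBlowupOf_iff_forall_transversal_eq {Red : SimpleGraph (V × S)} {G : SimpleGraph V}
    (hRed : Red ≤ (⊤ : SimpleGraph V).comap Prod.fst) :
    Red.IsBlowupOf G ↔ ∀ a, Red.transversal a = G := by
  classical
  constructor
  · intro h a
    ext x y
    rw [transversal_adj, h]
    exact and_iff_right_of_imp G.ne_of_adj
  · intro h i j a b
    by_cases hij : i = j
    · subst hij
      exact iff_of_false (fun hadj => hRed hadj rfl) fun h => h.1 rfl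
    rw [← h (Function.update (fun _ => a) j b), transversal_adj, Function.update_self,
      Function.update_of_ne hij]
    exact (and_iff_right hij).symm

lemma transversal_update_adj_of_ne [DecidableEq V] (Red : SimpleGraph (V × S)) (a : V → S)
    {v x y : V} (c : S) (hx : x ≠ v) (hy : y ≠ v) :
    (Red.transversal (Function.update a v c)).Adj x y ↔ (Red.transversal a).Adj x y := by
  rw [transversal_adj, transversal_adj, Function.update_of_ne hx, Function.update_of_ne hy]

/-- Replacing `a` by `b` in the two coordinates of an edge on which their transversals differ
shows that one of these two single-coordinate updates already changes the transversal. -/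
lemma exists_transversal_update_ne [DecidableEq V] {Red : SimpleGraph (V × S)} {a b : V → S}
    (hab : Red.transversal a ≠ Red.transversal b) :
    ∃ a' v c, Red.transversal (Function.update a' v c) ≠ Red.transversal a' := by
  obtain ⟨i, j, hij⟩ : ∃ i j, ¬((Red.transversal a).Adj i j ↔ (Red.transversal b).Adj i j) := by
    by_contra! h
    exact hab (SimpleGraph.ext (funext₂ fun i j => propext (h i j)))
  have hne : i ≠ j := by
    rintro rfl
    simp at hij
  by_cases hi : Red.transversal (Function.update a i (b i)) = Red.transversal a
  · refine ⟨Function.update a i (b i), j, b j, fun h => hij ?_⟩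
    rw [← hi, ← h, transversal_adj, transversal_adj, Function.update_self,
      Function.update_of_ne hne, Function.update_self]
  · exact ⟨a, i, b i, hi⟩

/-- An edge of `K_V[S]` at copy `c` of part `ℓ` is red iff it is red in `G c`; an edge away from
part `ℓ` is red iff it is red in every `G c`. -/
def mixedBlowup (ℓ : V) (G : S → SimpleGraph V) : SimpleGraph (V × S) where
  Adj u w := u.1 ≠ w.1 ∧ ∀ c, (u.1 = ℓ → c = u.2) → (w.1 = ℓ → c = w.2) → (G c).Adj u.1 w.1
  symm := ⟨fun _ _ h => ⟨h.1.symm, fun c hu hw => (h.2 c hw hu).symm⟩⟩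
  loopless := ⟨fun _ h => h.1 rfl⟩

lemma mixedBlowup_adj {ℓ : V} {G : S → SimpleGraph V} {u w : V × S} :
    (mixedBlowup ℓ G).Adj u w ↔
      u.1 ≠ w.1 ∧ ∀ c, (u.1 = ℓ → c = u.2) → (w.1 = ℓ → c = w.2) → (G c).Adj u.1 w.1 :=
  Iff.rfl

lemma mixedBlowup_le (ℓ : V) (G : S → SimpleGraph V) :
    mixedBlowup ℓ G ≤ (⊤ : SimpleGraph V).comap Prod.fst :=
  fun _ _ h => h.1

lemma transversal_mixedBlowup {ℓ : V} {G : S → SimpleGraph V}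
    (hG : ∀ c c' x y, x ≠ ℓ → y ≠ ℓ → ((G c).Adj x y ↔ (G c').Adj x y)) (a : V → S) :
    (mixedBlowup ℓ G).transversal a = G (a ℓ) := by
  ext x y
  rw [transversal_adj, mixedBlowup_adj]
  constructor
  · rintro ⟨-, h⟩
    exact h (a ℓ) (fun hx => hx ▸ rfl) fun hy => hy ▸ rfl
  · intro h
    refine ⟨(G (a ℓ)).ne_of_adj h, fun c hx hy => ?_⟩
    by_cases hxℓ : x = ℓ
    · subst hxℓ
      rwa [hx rfl]
    by_cases hyℓ : y = ℓ
    · subst hyℓ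
      rwa [hy rfl]
    exact (hG _ _ x y hxℓ hyℓ).1 h

end SimpleGraph

open SimpleGraph

lemma isMixedBlowup_iff {k s : ℕ} [NeZero s]
    (Red : SimpleGraph (Fin (ramsey2 k k - 1) × Fin s)) :
    IsMixedBlowup k s Red ↔ Red ≤ blowupGraph (ramsey2 k k - 1) s ∧
      (∀ a, (Red.transversal a).IsRamsey k) ∧ ∃ a b, Red.transversal a ≠ Red.transversal b := by
  constructor
  · rintro ⟨hle, hred, hblue, hnot⟩
    have hram : ∀ a, (Red.transversal a).IsRamsey k := fun a =>
      ⟨hred.comap (transversalEmbedding Red a).isContained, by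
        rw [← transversal_sdiff]
        exact hblue.comap (transversalEmbedding _ a).isContained⟩
    refine ⟨hle, hram, ?_⟩
    by_contra! h
    exact hnot ⟨Red.transversal 0, (hram 0).1, (hram 0).2,
      (isBlowupOf_iff_forall_transversal_eq hle).2 fun a => h a 0⟩
  · rintro ⟨hle, hram, a, b, hab⟩
    refine ⟨hle, cliqueFree_of_forall_transversal hle fun a => (hram a).1,
      cliqueFree_of_forall_transversal sdiff_le fun a => ?_, ?_⟩
    · rw [blowupGraph, transversal_sdiff]
      exact (hram a).2
    · rintro ⟨G, -, -, hG⟩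
      have h := (isBlowupOf_iff_forall_transversal_eq hle).1 hG
      exact hab ((h a).trans (h b).symm)

lemma extendsInTwoWays_iff {k : ℕ} :
    ExtendsInTwoWays k ↔ ∃ (v : Fin (ramsey2 k k - 1)) (G₁ G₂ : SimpleGraph _), G₁ ≠ G₂ ∧
      G₁.IsRamsey k ∧ G₂.IsRamsey k ∧ ∀ x y, x ≠ v → y ≠ v → (G₁.Adj x y ↔ G₂.Adj x y) := by
  have below_iff_ne_last : ∀ (x : Fin (ramsey2 k k - 1))
      (hlt : ramsey2 k k - 2 < ramsey2 k k - 1),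
      x.val < ramsey2 k k - 2 ↔ x ≠ ⟨ramsey2 k k - 2, hlt⟩ := fun x _ => by
    simp only [Ne, Fin.ext_iff]
    have := x.2
    omega
  constructor
  · rintro ⟨G₁, G₂, hne, h₁, h₁c, h₂, h₂c, hagree⟩
    obtain ⟨x, -⟩ := Function.ne_iff.1 (mt SimpleGraph.ext hne)
    have hlt : ramsey2 k k - 2 < ramsey2 k k - 1 := by have := x.2; omega
    refine ⟨⟨ramsey2 k k - 2, hlt⟩, G₁, G₂, hne, ⟨h₁, h₁c⟩, ⟨h₂, h₂c⟩, fun x y hx hy => ?_⟩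
    exact hagree x y ((below_iff_ne_last x hlt).2 hx) ((below_iff_ne_last y hlt).2 hy)
  · rintro ⟨v, G₁, G₂, hne, h₁, h₂, hagree⟩
    have hlt : ramsey2 k k - 2 < ramsey2 k k - 1 := by have := v.2; omega
    let σ := Equiv.swap ⟨ramsey2 k k - 2, hlt⟩ v
    have hσ : ∀ x, x.val < ramsey2 k k - 2 → σ x ≠ v := fun x hx => by
      rw [Ne, Equiv.swap_apply_eq_iff, Equiv.swap_apply_right]
      exact (below_iff_ne_last x hlt).1 hx
    obtain ⟨h₁, h₁c⟩ := h₁.of_embedding (Embedding.comap σ.toEmbedding G₁)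
    obtain ⟨h₂, h₂c⟩ := h₂.of_embedding (Embedding.comap σ.toEmbedding G₂)
    refine ⟨G₁.comap σ, G₂.comap σ, fun h => hne ?_, h₁, h₁c, h₂, h₂c,
      fun x y hx hy => hagree _ _ (hσ x hx) (hσ y hy)⟩
    ext x y
    simpa [σ] using congrArg (fun G => G.Adj (σ x) (σ y)) h

lemma exists_isMixedBlowup {k s : ℕ} (hs : 2 ≤ s) {v : Fin (ramsey2 k k - 1)}
    {G₁ G₂ : SimpleGraph (Fin (ramsey2 k k - 1))} (hne : G₁ ≠ G₂) (h₁ : G₁.IsRamsey k)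
    (h₂ : G₂.IsRamsey k) (hagree : ∀ x y, x ≠ v → y ≠ v → (G₁.Adj x y ↔ G₂.Adj x y)) :
    ∃ Red, IsMixedBlowup k s Red := by
  have : NeZero s := ⟨by omega⟩
  let G : Fin s → SimpleGraph (Fin (ramsey2 k k - 1)) := fun c => if c = 0 then G₁ else G₂
  have hG : ∀ c c' x y, x ≠ v → y ≠ v → ((G c).Adj x y ↔ (G c').Adj x y) := by
    intro c c' x y hx hy
    simp only [G]
    split_ifs <;> simp only [hagree x y hx hy]
  have hone : (⟨1, hs⟩ : Fin s) ≠ 0 := by simp [Fin.ext_iff]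
  refine ⟨mixedBlowup v G, (isMixedBlowup_iff _).2
    ⟨mixedBlowup_le v G, fun a => ?_, fun _ => 0, fun _ => ⟨1, hs⟩, ?_⟩⟩
  · rw [transversal_mixedBlowup hG]
    simp only [G]
    split_ifs
    exacts [h₁, h₂]
  · rw [transversal_mixedBlowup hG, transversal_mixedBlowup hG]
    simpa [G, hone] using hne

lemma extendsInTwoWays_of_isMixedBlowup {k s : ℕ} [NeZero s]
    {Red : SimpleGraph (Fin (ramsey2 k k - 1) × Fin s)} (h : IsMixedBlowup k s Red) :
    ExtendsInTwoWays k := by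
  obtain ⟨-, hram, a, b, hab⟩ := (isMixedBlowup_iff Red).1 h
  obtain ⟨a', v, c, hne⟩ := exists_transversal_update_ne hab
  exact extendsInTwoWays_iff.2 ⟨v, _, _, hne, hram _, hram _,
    fun x y hx hy => transversal_update_adj_of_ne Red a' c hx hy⟩

theorem statement17_general (k : ℕ) :
    (ExtendsInTwoWays k ↔
      ∀ s : ℕ, 2 ≤ s → ∃ Red : SimpleGraph (Fin (ramsey2 k k - 1) × Fin s),
        IsMixedBlowup k s Red) ∧
    ((∀ s : ℕ, 2 ≤ s → ∃ Red : SimpleGraph (Fin (ramsey2 k k - 1) × Fin s),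
        IsMixedBlowup k s Red) ↔
      ∃ Red : SimpleGraph (Fin (ramsey2 k k - 1) × Fin 2), IsMixedBlowup k 2 Red) := by
  have blowup_of_extends : ExtendsInTwoWays k → ∀ s, 2 ≤ s → ∃ Red, IsMixedBlowup k s Red := by
    intro h s hs
    obtain ⟨v, G₁, G₂, hne, h₁, h₂, hagree⟩ := extendsInTwoWays_iff.1 h
    exact exists_isMixedBlowup hs hne h₁ h₂ hagree
  have extends_of_blowup : (∃ Red, IsMixedBlowup k 2 Red) → ExtendsInTwoWays k :=
    fun ⟨_, h⟩ => extendsInTwoWays_of_isMixedBlowup h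
  exact ⟨⟨blowup_of_extends, fun h => extends_of_blowup (h 2 le_rfl)⟩,
    fun h => h 2 le_rfl, fun h => blowup_of_extends (extends_of_blowup h)⟩

theorem statement17 (k : ℕ) (hk : 3 ≤ k) :
    (ExtendsInTwoWays k ↔
      ∀ s : ℕ, 2 ≤ s → ∃ Red : SimpleGraph (Fin (ramsey2 k k - 1) × Fin s),
        IsMixedBlowup k s Red) ∧
    ((∀ s : ℕ, 2 ≤ s → ∃ Red : SimpleGraph (Fin (ramsey2 k k - 1) × Fin s),
        IsMixedBlowup k s Red) ↔
      ∃ Red : SimpleGraph (Fin (ramsey2 k k - 1) × Fin 2), IsMixedBlowup k 2 Red) :=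
  statement17_general k
end
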